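/- arXiv:2605.14413 — 7 statements merged into one kernel-verified Lean document; each statement's English description precedes it below -/
import Mathlib

section
/- Let C ≥ 2 and let μ_1,…,μ_C ∈ ℝ^d form a regular simplex with side K > 0, i.e. ‖μ_c − μ_{c′}‖ = K for all c ≠ c′. Let 0 ≤ ε < K/2 and suppose x ∈ ℝ^d satisfies ‖x − μ_{c*}‖ ≤ ε for some index c*. Set γ = ε·√(2C/(K²(C−1))). Then ((C−1)K⁴/C²)·(1−γ)² ≤ Var_c[‖x − μ_c‖²] ≤ ((C−1)K⁴/C²)·(1+γ)² + 2ε²K²(C−2)/C. -/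
/-!
Write `δ = x - μ c⋆`. Since `‖μ c - μ c⋆‖² = K² [c ≠ c⋆]`, the squared distances are, up to an
additive constant, `u c + v c` with `u c = K² [c ≠ c⋆]` and `v c = -2 ⟪μ c, δ⟫`; the variance of `u`
is `(C - 1) K⁴ / C²`. For weights `w` summing to zero the Gram matrix of a regular simplex gives
`‖∑ w c • μ c‖² = K² / 2 * ∑ (w c)²`, so Cauchy–Schwarz bounds the variance of `c ↦ ⟪μ c, δ⟫` by
`K² ‖δ‖² / (2C)`, i.e. `Var v ≤ γ² Var u`. The standard deviation is a seminorm (the Euclidean norm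
of the centred family scaled by `1/√C`), so `(1 - γ) σ_u ≤ σ_{u+v} ≤ (1 + γ) σ_u`; squaring the
lower bound is legitimate because `ε < K / 2` and `C ≥ 2` force `γ ≤ 1`.
-/

open scoped RealInnerProductSpace
open Finset

/-- Variance of a finite family of reals indexed by `Fin C`. -/
noncomputable def varFam {C : ℕ} (a : Fin C → ℝ) : ℝ :=
  (1 / (C : ℝ)) * ∑ c, (a c - (1 / (C : ℝ)) * ∑ c', a c') ^ 2

section NormAdd

variable {E : Type*} [SeminormedAddCommGroup E] {u v : E} {γ : ℝ}

theorem norm_add_sq_le_of_norm_le_mul (h : ‖v‖ ≤ γ * ‖u‖) :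
    ‖u + v‖ ^ 2 ≤ ‖u‖ ^ 2 * (1 + γ) ^ 2 := by
  rw [← mul_pow]
  refine pow_le_pow_left₀ (norm_nonneg _) ?_ 2
  linarith [norm_add_le u v]

theorem le_norm_add_sq_of_norm_le_mul (hγ : γ ≤ 1) (h : ‖v‖ ≤ γ * ‖u‖) :
    ‖u‖ ^ 2 * (1 - γ) ^ 2 ≤ ‖u + v‖ ^ 2 := by
  rw [← mul_pow]
  refine pow_le_pow_left₀ (mul_nonneg (norm_nonneg _) (by linarith)) ?_ 2
  linarith [norm_sub_le_norm_add u v]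

end NormAdd

namespace varFam

variable {C : ℕ}

noncomputable def deviation (a : Fin C → ℝ) : EuclideanSpace ℝ (Fin C) :=
  WithLp.toLp 2 fun c => (a c - (1 / (C : ℝ)) * ∑ c', a c') / √C

theorem eq_norm_deviation_sq (a : Fin C → ℝ) : varFam a = ‖deviation a‖ ^ 2 := by
  simp only [varFam, EuclideanSpace.norm_sq_eq, deviation, Real.norm_eq_abs, sq_abs, div_pow,
    Real.sq_sqrt C.cast_nonneg, ← sum_div]
  rw [one_div_mul_eq_div]

theorem deviation_add (a b : Fin C → ℝ) : deviation (a + b) = deviation a + deviation b := by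
  ext c
  simp only [deviation, Pi.add_apply, sum_add_distrib, PiLp.add_apply]
  ring

theorem const_add (k : ℝ) (a : Fin C → ℝ) : varFam (fun c => k + a c) = varFam a := by
  rcases Nat.eq_zero_or_pos C with rfl | hC
  · simp [varFam]
  have hk : 1 / (C : ℝ) * (C * k) = k := by field_simp
  simp only [varFam, sum_add_distrib, sum_const, card_univ, Fintype.card_fin, nsmul_eq_mul, mul_add,
    hk, add_sub_add_left_eq_sub]

theorem mul_left (r : ℝ) (a : Fin C → ℝ) : varFam (fun c => r * a c) = r ^ 2 * varFam a := by
  have hsq : ∀ c, (r * a c - 1 / (C : ℝ) * ∑ c', r * a c') ^ 2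
      = r ^ 2 * (a c - 1 / (C : ℝ) * ∑ c', a c') ^ 2 := fun c => by
    rw [← mul_sum]; ring
  simp only [varFam, hsq]
  rw [← mul_sum]
  ring

theorem ite_zero_const (c₀ : Fin C) (t : ℝ) :
    varFam (fun c => if c = c₀ then 0 else t) = ((C : ℝ) - 1) * t ^ 2 / (C : ℝ) ^ 2 := by
  have hC : (C : ℝ) ≠ 0 := by have := c₀.pos; positivity
  have hsum : ∀ x y : ℝ, ∑ c : Fin C, (if c = c₀ then x else y) = x + ((C : ℝ) - 1) * y := by
    intro x y
    simp [sum_ite, filter_ne', filter_eq', Nat.cast_sub c₀.pos]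
  simp only [varFam, hsum]
  rw [sum_congr rfl fun c _ => apply_ite (fun z : ℝ => (z - _) ^ 2) (c = c₀) 0 t, hsum]
  field_simp
  ring

theorem norm_deviation_le {a b : Fin C → ℝ} {γ : ℝ} (hγ : 0 ≤ γ)
    (h : varFam b ≤ γ ^ 2 * varFam a) : ‖deviation b‖ ≤ γ * ‖deviation a‖ := by
  rw [eq_norm_deviation_sq, eq_norm_deviation_sq, ← mul_pow] at h
  exact (pow_le_pow_iff_left₀ (norm_nonneg _) (by positivity) two_ne_zero).1 h

theorem add_le {a b : Fin C → ℝ} {γ : ℝ} (hγ : 0 ≤ γ) (h : varFam b ≤ γ ^ 2 * varFam a) :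
    varFam (a + b) ≤ varFam a * (1 + γ) ^ 2 := by
  simpa only [eq_norm_deviation_sq, deviation_add] using
    norm_add_sq_le_of_norm_le_mul (norm_deviation_le hγ h)

theorem le_add {a b : Fin C → ℝ} {γ : ℝ} (hγ : 0 ≤ γ) (hγ1 : γ ≤ 1)
    (h : varFam b ≤ γ ^ 2 * varFam a) : varFam a * (1 - γ) ^ 2 ≤ varFam (a + b) := by
  simpa only [eq_norm_deviation_sq, deviation_add] using
    le_norm_add_sq_of_norm_le_mul hγ1 (norm_deviation_le hγ h)

end varFam

section RegularSimplex

variable {ι E : Type*} [NormedAddCommGroup E] [InnerProductSpace ℝ E] {μ : ι → E} {K : ℝ}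

theorem norm_sum_smul_sq_of_pairwise_norm_sub_eq [Fintype ι]
    (hμ : ∀ i j, i ≠ j → ‖μ i - μ j‖ = K)
    {w : ι → ℝ} (hw : ∑ i, w i = 0) :
    ‖∑ i, w i • μ i‖ ^ 2 = K ^ 2 / 2 * ∑ i, w i ^ 2 := by
  classical
  have hsq : ∀ i j, ‖μ i - μ j‖ * ‖μ i - μ j‖ = K ^ 2 - if i = j then K ^ 2 else 0 := by
    intro i j
    by_cases h : i = j
    · simp [h]
    · simp [h, hμ i j h, sq]
  rw [← real_inner_self_eq_norm_sq, inner_sum_smul_sum_smul_of_sum_eq_zero _ hw _ hw]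
  simp only [hsq, mul_sub, mul_ite, mul_zero, sum_sub_distrib, sum_ite_eq, mem_univ, if_true,
    ← sum_mul, ← mul_sum, hw, zero_mul, sum_const_zero, sq]
  ring

theorem sum_mul_inner_sq_le [Fintype ι] (hμ : ∀ i j, i ≠ j → ‖μ i - μ j‖ = K)
    {w : ι → ℝ} (hw : ∑ i, w i = 0) (δ : E) :
    (∑ i, w i * ⟪μ i, δ⟫) ^ 2 ≤ K ^ 2 / 2 * (∑ i, w i ^ 2) * ‖δ‖ ^ 2 := by
  have hsum : ∑ i, w i * ⟪μ i, δ⟫ = ⟪∑ i, w i • μ i, δ⟫ := by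
    simp only [sum_inner, real_inner_smul_left]
  rw [hsum, ← norm_sum_smul_sq_of_pairwise_norm_sub_eq hμ hw, ← mul_pow, ← sq_abs]
  exact pow_le_pow_left₀ (abs_nonneg _) (abs_real_inner_le_norm _ _) 2

theorem norm_sub_sq_eq_of_pairwise_norm_sub_eq [DecidableEq ι]
    (hμ : ∀ i j, i ≠ j → ‖μ i - μ j‖ = K) (x : E) (i₀ i : ι) :
    ‖x - μ i‖ ^ 2 = (‖x - μ i₀‖ ^ 2 + 2 * ⟪μ i₀, x - μ i₀⟫)
      + ((if i = i₀ then 0 else K ^ 2) + -2 * ⟪μ i, x - μ i₀⟫) := by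
  have hsplit : x - μ i = (x - μ i₀) - (μ i - μ i₀) := by abel
  have hside : ‖μ i - μ i₀‖ ^ 2 = if i = i₀ then 0 else K ^ 2 := by
    split_ifs with h
    · simp [h]
    · rw [hμ i i₀ h]
  rw [hsplit, norm_sub_sq_real, hside, inner_sub_right, real_inner_comm, real_inner_comm (μ i₀)]
  ring

theorem varFam_inner_le_of_pairwise_norm_sub_eq {C : ℕ} {μ : Fin C → E}
    (hμ : ∀ i j, i ≠ j → ‖μ i - μ j‖ = K) (δ : E) :
    varFam (fun c => ⟪μ c, δ⟫) ≤ K ^ 2 * ‖δ‖ ^ 2 / (2 * C) := by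
  set m := 1 / (C : ℝ) * ∑ c, ⟪μ c, δ⟫
  set w : Fin C → ℝ := fun c => ⟪μ c, δ⟫ - m
  have hw : ∑ c, w c = 0 := by
    rcases C.eq_zero_or_pos with rfl | hC
    · simp
    · simp only [w, m, sum_sub_distrib, sum_const, card_univ, Fintype.card_fin, nsmul_eq_mul]
      field_simp
      ring
  have hws : ∑ c, w c * ⟪μ c, δ⟫ = ∑ c, w c ^ 2 := by
    have : ∑ c, w c * m = 0 := by rw [← sum_mul, hw, zero_mul]
    simp only [w, sq, sub_mul, sum_sub_distrib, mul_sub] at this ⊢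
    linarith
  have hS : ∑ c, w c ^ 2 ≤ K ^ 2 / 2 * ‖δ‖ ^ 2 := by
    have hcs := sum_mul_inner_sq_le hμ hw δ
    rw [hws] at hcs
    nlinarith [sum_nonneg fun c (_ : c ∈ univ) => sq_nonneg (w c), sq_nonneg (K * ‖δ‖)]
  calc varFam (fun c => ⟪μ c, δ⟫) = (∑ c, w c ^ 2) / C := by simp only [varFam, w, m]; ring
    _ ≤ K ^ 2 / 2 * ‖δ‖ ^ 2 / C := by gcongr
    _ = K ^ 2 * ‖δ‖ ^ 2 / (2 * C) := by ring

end RegularSimplex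

theorem id_classwise_variance_bounds_general {d C : ℕ} (hC : 2 ≤ C) (K ε : ℝ)
    (μ : Fin C → EuclideanSpace ℝ (Fin d))
    (hsimplex : ∀ c c', c ≠ c' → ‖μ c - μ c'‖ = K)
    (hε : ε < K / 2)
    (x : EuclideanSpace ℝ (Fin d)) (cstar : Fin C)
    (hx : ‖x - μ cstar‖ ≤ ε)
    (γ : ℝ) (hγ : γ = ε * Real.sqrt (2 * C / (K ^ 2 * ((C : ℝ) - 1)))) :
    (((C : ℝ) - 1) * K ^ 4 / (C : ℝ) ^ 2) * (1 - γ) ^ 2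
      ≤ varFam (fun c => ‖x - μ c‖ ^ 2) ∧
    varFam (fun c => ‖x - μ c‖ ^ 2)
      ≤ (((C : ℝ) - 1) * K ^ 4 / (C : ℝ) ^ 2) * (1 + γ) ^ 2
        + 2 * ε ^ 2 * K ^ 2 * ((C : ℝ) - 2) / (C : ℝ) := by
  have hε0 : 0 ≤ ε := (norm_nonneg _).trans hx
  have hK : 0 < K := by linarith
  have hC2 : (2 : ℝ) ≤ C := by exact_mod_cast hC
  have hC1 : (0 : ℝ) < C - 1 := by linarith
  set u : Fin C → ℝ := fun c => if c = cstar then 0 else K ^ 2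
  set v : Fin C → ℝ := fun c => -2 * ⟪μ c, x - μ cstar⟫
  have hdist : (fun c => ‖x - μ c‖ ^ 2)
      = fun c => (‖x - μ cstar‖ ^ 2 + 2 * ⟪μ cstar, x - μ cstar⟫) + (u + v) c :=
    funext (norm_sub_sq_eq_of_pairwise_norm_sub_eq hsimplex x cstar)
  have hu : varFam u = ((C : ℝ) - 1) * K ^ 4 / (C : ℝ) ^ 2 := by
    rw [varFam.ite_zero_const]; ring
  have hγsq : γ ^ 2 = 2 * C * ε ^ 2 / (K ^ 2 * ((C : ℝ) - 1)) := by
    rw [hγ, mul_pow, Real.sq_sqrt (div_nonneg (by positivity) (by positivity))]; ring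
  have hγ0 : 0 ≤ γ := hγ ▸ by positivity
  have hγ1 : γ ≤ 1 := by
    refine (sq_le_one_iff₀ hγ0).1 ?_
    have hε2 : 4 * ε ^ 2 ≤ K ^ 2 := by nlinarith
    rw [hγsq, div_le_one (by positivity)]
    nlinarith [mul_nonneg (sq_nonneg K) (sub_nonneg.2 hC2)]
  have hv : varFam v ≤ γ ^ 2 * varFam u := calc
    varFam v = 4 * varFam (fun c => ⟪μ c, x - μ cstar⟫) := by rw [varFam.mul_left]; norm_num
    _ ≤ 4 * (K ^ 2 * ε ^ 2 / (2 * C)) := by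
      gcongr
      exact (varFam_inner_le_of_pairwise_norm_sub_eq hsimplex _).trans (by gcongr)
    _ = γ ^ 2 * varFam u := by rw [hγsq, hu]; field_simp; ring
  rw [hdist, varFam.const_add, ← hu]
  refine ⟨varFam.le_add hγ0 hγ1 hv, (varFam.add_le hγ0 hv).trans (le_add_of_nonneg_right ?_)⟩
  exact div_nonneg (mul_nonneg (by positivity) (sub_nonneg.2 hC2)) (by positivity)

theorem id_classwise_variance_bounds {d C : ℕ} (hC : 2 ≤ C) (K ε : ℝ) (hK : 0 < K)
    (μ : Fin C → EuclideanSpace ℝ (Fin d))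
    (hsimplex : ∀ c c', c ≠ c' → ‖μ c - μ c'‖ = K)
    (hε0 : 0 ≤ ε) (hε : ε < K / 2)
    (x : EuclideanSpace ℝ (Fin d)) (cstar : Fin C)
    (hx : ‖x - μ cstar‖ ≤ ε)
    (γ : ℝ) (hγ : γ = ε * Real.sqrt (2 * C / (K ^ 2 * ((C : ℝ) - 1)))) :
    (((C : ℝ) - 1) * K ^ 4 / (C : ℝ) ^ 2) * (1 - γ) ^ 2
      ≤ varFam (fun c => ‖x - μ c‖ ^ 2) ∧
    varFam (fun c => ‖x - μ c‖ ^ 2)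
      ≤ (((C : ℝ) - 1) * K ^ 4 / (C : ℝ) ^ 2) * (1 + γ) ^ 2
        + 2 * ε ^ 2 * K ^ 2 * ((C : ℝ) - 2) / (C : ℝ) :=
  id_classwise_variance_bounds_general hC K ε μ hsimplex hε x cstar hx γ hγ
end

section
/- Let C ≥ 2 and let μ_1,…,μ_C ∈ ℝ^d form a centered simplex ETF with radius R, where 0 < R ≤ 1, and let K = R·√(2C/(C−1)) denote the common pairwise distance. Let 0 ≤ ε < K/2. Suppose x ∈ ℝ^d satisfies ‖x‖ = 1 and ‖x − μ_{c*}‖ ≤ ε for some index c*, and suppose z ∈ ℝ^d satisfies ‖z‖ = 1 and max_c |⟨z, μ_c⟩| < R(R−ε)/√(C−1). Then Var_c[‖x − μ_c‖²] > Var_c[‖z − μ_c‖²]. -/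
open scoped RealInnerProductSpace
open Finset

lemma var_formula {d C : ℕ} (hC : 2 ≤ C) (R : ℝ)
    (μ : Fin C → EuclideanSpace ℝ (Fin d))
    (hnorm : ∀ c, ‖μ c‖ = R)
    (hsum : ∑ c, μ c = 0)
    (v : EuclideanSpace ℝ (Fin d)) (hv : ‖v‖ = 1) :
    varFam (fun c => ‖v - μ c‖ ^ 2) = (4 / (C : ℝ)) * ∑ c, ⟪v, μ c⟫ ^ 2 := by
  have hC0 : (0:ℝ) < (C:ℝ) := by positivity
  have hCne : (C:ℝ) ≠ 0 := ne_of_gt hC0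
  have hinner : ∑ c, ⟪v, μ c⟫ = 0 := by
    rw [← inner_sum, hsum, inner_zero_right]
  have ha : ∀ c, ‖v - μ c‖ ^ 2 = 1 + R ^ 2 - 2 * ⟪v, μ c⟫ := by
    intro c
    rw [@norm_sub_sq_real, hv, hnorm]
    ring
  have hmean : (1 / (C : ℝ)) * ∑ c, ‖v - μ c‖ ^ 2 = 1 + R ^ 2 := by
    simp only [ha]
    rw [Finset.sum_sub_distrib, ← Finset.mul_sum, hinner, Finset.sum_add_distrib]
    simp
    field_simp
  unfold varFam
  rw [hmean]
  rw [Finset.mul_sum, Finset.mul_sum]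
  refine Finset.sum_congr rfl fun c _ => ?_
  simp only [ha]
  ring

set_option maxHeartbeats 1000000 in
theorem id_variance_strictly_exceeds_ood {d C : ℕ} (hC : 2 ≤ C) (R K ε : ℝ)
    (hR0 : 0 < R) (hR1 : R ≤ 1)
    (μ : Fin C → EuclideanSpace ℝ (Fin d))
    (hnorm : ∀ c, ‖μ c‖ = R)
    (hangle : ∀ c c', c ≠ c' → ⟪μ c, μ c'⟫ = -R ^ 2 / ((C : ℝ) - 1))
    (hsum : ∑ c, μ c = 0)
    (hK : K = R * Real.sqrt (2 * C / ((C : ℝ) - 1)))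
    (hε0 : 0 ≤ ε) (hε : ε < K / 2)
    (x : EuclideanSpace ℝ (Fin d)) (hxnorm : ‖x‖ = 1)
    (cstar : Fin C) (hx : ‖x - μ cstar‖ ≤ ε)
    (z : EuclideanSpace ℝ (Fin d)) (hznorm : ‖z‖ = 1)
    (hz : ∀ c, |⟪z, μ c⟫| < R * (R - ε) / Real.sqrt ((C : ℝ) - 1)) :
    varFam (fun c => ‖z - μ c‖ ^ 2) < varFam (fun c => ‖x - μ c‖ ^ 2) := by
  have h2 : (2:ℝ) ≤ (C:ℝ) := by exact_mod_cast hC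
  have hC0 : (0:ℝ) < (C:ℝ) := by linarith
  have hC1pos : (0:ℝ) < (C:ℝ) - 1 := by linarith
  -- ε < R
  have hsqrt4 : Real.sqrt 4 = 2 := by
    rw [show (4:ℝ) = 2^2 by norm_num, Real.sqrt_sq]; norm_num
  have hKle : K ≤ 2 * R := by
    rw [hK]
    have h1 : 2 * (C:ℝ) / ((C:ℝ) - 1) ≤ 4 := by
      rw [div_le_iff₀ hC1pos]; linarith
    have h3 : Real.sqrt (2 * (C:ℝ) / ((C:ℝ) - 1)) ≤ 2 := by
      calc Real.sqrt (2 * (C:ℝ) / ((C:ℝ) - 1)) ≤ Real.sqrt 4 := Real.sqrt_le_sqrt h1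
        _ = 2 := hsqrt4
    nlinarith [Real.sqrt_nonneg (2 * (C:ℝ) / ((C:ℝ) - 1))]
  have hεR : ε < R := lt_of_lt_of_le hε (by linarith)
  have hRe : 0 < R - ε := by linarith
  have hRe1 : R - ε ≤ 1 := by linarith
  -- lower bound on ⟪x, μ cstar⟫
  have hxin : R * (R - ε) ≤ ⟪x, μ cstar⟫ := by
    have h1 : ‖x - μ cstar‖ ^ 2 ≤ ε ^ 2 := by
      nlinarith [norm_nonneg (x - μ cstar)]
    have h2' : ‖x - μ cstar‖ ^ 2 = 1 + R ^ 2 - 2 * ⟪x, μ cstar⟫ := by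
      rw [@norm_sub_sq_real, hxnorm, hnorm]; ring
    nlinarith
  rw [var_formula hC R μ hnorm hsum z hznorm, var_formula hC R μ hnorm hsum x hxnorm]
  have h4C : (0:ℝ) < 4 / (C:ℝ) := by positivity
  have hS : Real.sqrt ((C:ℝ)-1) ^ 2 = (C:ℝ) - 1 := Real.sq_sqrt (le_of_lt hC1pos)
  set B := R * (R - ε) with hBdef
  have hB : 0 < B := mul_pos hR0 hRe
  -- upper bound for z
  have hzsum : ∑ c, ⟪z, μ c⟫ ^ 2 < (C:ℝ) * (B ^ 2 / ((C:ℝ) - 1)) := by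
    have hne : (univ : Finset (Fin C)).Nonempty := by
      refine ⟨cstar, mem_univ _⟩
    calc ∑ c, ⟪z, μ c⟫ ^ 2 < ∑ _c : Fin C, (B ^ 2 / ((C:ℝ) - 1)) := by
          apply Finset.sum_lt_sum_of_nonempty hne
          intro c _
          have h := hz c
          have h2' : ⟪z, μ c⟫ ^ 2 < (B / Real.sqrt ((C:ℝ)-1)) ^ 2 := by
            rw [← sq_abs]
            exact pow_lt_pow_left₀ h (abs_nonneg _) two_ne_zero
          rwa [div_pow, hS] at h2'
      _ = (C:ℝ) * (B ^ 2 / ((C:ℝ) - 1)) := by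
          rw [Finset.sum_const, card_univ]; simp [nsmul_eq_mul]
  -- lower bound for x
  have hxsum : (C:ℝ) * (B ^ 2 / ((C:ℝ) - 1)) ≤ ∑ c, ⟪x, μ c⟫ ^ 2 := by
    set a : Fin C → ℝ := fun c => ⟪x, μ c⟫ with hadef
    have htot : ∑ c, a c = 0 := by
      simp only [hadef]; rw [← inner_sum, hsum, inner_zero_right]
    have hsplit : ∑ c, a c = a cstar + ∑ c ∈ univ.erase cstar, a c :=
      (Finset.add_sum_erase _ _ (mem_univ _)).symm
    have hrest : ∑ c ∈ univ.erase cstar, a c = - a cstar := by linarith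
    have hcard : ((univ.erase cstar).card : ℝ) = (C:ℝ) - 1 := by
      rw [Finset.card_erase_of_mem (mem_univ _), card_univ, Fintype.card_fin]
      have : 1 ≤ C := by omega
      push_cast [Nat.cast_sub this]; ring
    have hcs : (a cstar) ^ 2 ≤ ((C:ℝ) - 1) * ∑ c ∈ univ.erase cstar, (a c) ^ 2 := by
      have h := sq_sum_le_card_mul_sum_sq (s := univ.erase cstar) (f := a)
      rw [hrest] at h
      rw [← neg_sq]
      calc (- a cstar) ^ 2 ≤ ((univ.erase cstar).card : ℝ) * ∑ c ∈ univ.erase cstar, (a c) ^ 2 := h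
        _ = ((C:ℝ) - 1) * ∑ c ∈ univ.erase cstar, (a c) ^ 2 := by rw [hcard]
    have hsplit2 : ∑ c, (a c) ^ 2 = (a cstar) ^ 2 + ∑ c ∈ univ.erase cstar, (a c) ^ 2 :=
      (Finset.add_sum_erase _ _ (mem_univ _)).symm
    have hA : B ≤ a cstar := hxin
    have hA2 : B ^ 2 ≤ (a cstar) ^ 2 := by nlinarith
    have hgoal : (C:ℝ) * (B ^ 2 / ((C:ℝ) - 1)) ≤ (a cstar) ^ 2 + ∑ c ∈ univ.erase cstar, (a c) ^ 2 := by
      rw [show (C:ℝ) * (B ^ 2 / ((C:ℝ) - 1)) = ((C:ℝ) * B ^ 2) / ((C:ℝ) - 1) by ring,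
        div_le_iff₀ hC1pos]
      have key : ∀ A2 S : ℝ, B ^ 2 ≤ A2 → A2 ≤ ((C:ℝ) - 1) * S →
          (C:ℝ) * B ^ 2 ≤ (A2 + S) * ((C:ℝ) - 1) := by
        intro A2 S h1 h2'
        nlinarith
      exact key _ _ hA2 hcs
    calc (C:ℝ) * (B ^ 2 / ((C:ℝ) - 1)) ≤ (a cstar) ^ 2 + ∑ c ∈ univ.erase cstar, (a c) ^ 2 := hgoal
      _ = ∑ c, (a c) ^ 2 := hsplit2.symm
  exact mul_lt_mul_of_pos_left (lt_of_lt_of_le hzsum hxsum) h4C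
end

section
/- Let C ≥ 2 and let μ_1,…,μ_C ∈ ℝ^d form a centered simplex ETF with radius R, where 0 < R ≤ 1, and let K = R·√(2C/(C−1)) denote the common pairwise distance. Let 0 ≤ ε < K/2. Suppose x ∈ ℝ^d satisfies ‖x‖ = 1, ‖x − μ_{c*}‖ ≤ ε for some index c*, and x − μ_{c*} ∈ span(μ_1,…,μ_C). Then for every z ∈ ℝ^d with ‖z‖ = 1 one has Var_c[‖x − μ_c‖²] ≥ Var_c[‖z − μ_c‖²], with equality if and only if z ∈ span(μ_1,…,μ_C). -/
open scoped RealInnerProductSpace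
open Finset

/-! For a centered simplex ETF the frame operator `∑ c, μ c ⊗ μ c` is `R² C / (C - 1)` times the
orthogonal projection `P` onto `V = span μ`. Since `∑ c, μ c = 0` and all `‖μ c‖` agree, the
variance of `‖w - μ c‖²` is `4 / C · ∑ c, ⟪μ c, w⟫² = 4 R² / (C - 1) · ‖P w‖²`. For unit `w` this is
at most `4 R² / (C - 1)`, with equality exactly when `w ∈ V`; and the hypothesis on `x` says that
`x = μ c* + (x - μ c*)` lies in `V`. -/

variable {E : Type*} [NormedAddCommGroup E] [InnerProductSpace ℝ E] {ι : Type*} [Fintype ι]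

structure IsCenteredSimplexETF (μ : ι → E) (R : ℝ) : Prop where
  norm_eq : ∀ c, ‖μ c‖ = R
  inner_eq : ∀ c c', c ≠ c' → ⟪μ c, μ c'⟫ = -R ^ 2 / ((Fintype.card ι : ℝ) - 1)
  sum_eq_zero : ∑ c, μ c = 0

noncomputable def frameOperator (μ : ι → E) : E →ₗ[ℝ] E :=
  ∑ c, (innerₛₗ ℝ (μ c)).smulRight (μ c)

instance (μ : ι → E) : (Submodule.span ℝ (Set.range μ)).HasOrthogonalProjection :=
  have := FiniteDimensional.span_of_finite ℝ (Set.finite_range μ)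
  inferInstance

theorem frameOperator_apply (μ : ι → E) (v : E) :
    frameOperator μ v = ∑ c, ⟪μ c, v⟫ • μ c := by
  simp [frameOperator]

theorem frameOperator_eq_smul_of_mem_span {μ : ι → E} {lam : ℝ}
    (h : ∀ c, frameOperator μ (μ c) = lam • μ c) {v : E}
    (hv : v ∈ Submodule.span ℝ (Set.range μ)) : frameOperator μ v = lam • v :=
  LinearMap.eqOn_span' (g := lam • LinearMap.id) (by rintro _ ⟨c, rfl⟩; exact h c) hv

theorem sum_inner_sq_eq_mul_norm_starProjection_sq {μ : ι → E} {lam : ℝ}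
    (h : ∀ c, frameOperator μ (μ c) = lam • μ c) (w : E) :
    ∑ c, ⟪μ c, w⟫ ^ 2 = lam * ‖(Submodule.span ℝ (Set.range μ)).starProjection w‖ ^ 2 := by
  set V := Submodule.span ℝ (Set.range μ)
  have hμV : ∀ c, μ c ∈ V := fun c => Submodule.subset_span (Set.mem_range_self c)
  -- Only the component of `w` in `V` is seen by the `μ c`.
  have hproj : ∀ c, ⟪μ c, w⟫ = ⟪μ c, V.starProjection w⟫ := fun c => by
    rw [← V.inner_starProjection_left_eq_right, Submodule.starProjection_eq_self_iff.mpr (hμV c)]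
  calc ∑ c, ⟪μ c, w⟫ ^ 2 = ⟪frameOperator μ (V.starProjection w), V.starProjection w⟫ := by
        simp only [frameOperator_apply, sum_inner, real_inner_smul_left, ← hproj, sq]
    _ = lam * ‖V.starProjection w‖ ^ 2 := by
        rw [frameOperator_eq_smul_of_mem_span h (V.starProjection_apply_mem w),
          real_inner_smul_left, real_inner_self_eq_norm_sq]

theorem IsCenteredSimplexETF.frameOperator_apply_self {μ : ι → E} {R : ℝ}
    (h : IsCenteredSimplexETF μ R) (hC : 2 ≤ Fintype.card ι) (c' : ι) :
    frameOperator μ (μ c') =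
      (R ^ 2 * Fintype.card ι / ((Fintype.card ι : ℝ) - 1)) • μ c' := by
  classical
  have hC1 : (Fintype.card ι : ℝ) - 1 ≠ 0 := by
    have : (2 : ℝ) ≤ Fintype.card ι := by exact_mod_cast hC
    linarith
  have hterm : ∀ c, ⟪μ c, μ c'⟫ • μ c = (-R ^ 2 / ((Fintype.card ι : ℝ) - 1)) • μ c +
      if c = c' then (R ^ 2 + R ^ 2 / ((Fintype.card ι : ℝ) - 1)) • μ c' else 0 := fun c => by
    by_cases hc : c = c'
    · subst hc
      rw [real_inner_self_eq_norm_sq, h.norm_eq, if_pos rfl, ← add_smul]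
      ring_nf
    · rw [h.inner_eq c c' hc, if_neg hc, add_zero]
  rw [frameOperator_apply, Finset.sum_congr rfl fun c _ => hterm c, sum_add_distrib, ← smul_sum,
    h.sum_eq_zero, sum_ite_eq', if_pos (mem_univ _), smul_zero, zero_add]
  congr 1
  field_simp
  ring

theorem varFam_const_add_mul {C : ℕ} (a b : ℝ) {f : Fin C → ℝ} (hf : ∑ c, f c = 0) :
    varFam (fun c => a + b * f c) = b ^ 2 / C * ∑ c, f c ^ 2 := by
  rcases Nat.eq_zero_or_pos C with rfl | hC
  · simp [varFam]
  have hmean : (1 / (C : ℝ)) * ∑ c, (a + b * f c) = a := by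
    rw [sum_add_distrib, ← mul_sum, hf, sum_const, card_univ, Fintype.card_fin, nsmul_eq_mul]
    field_simp
    ring
  simp only [varFam, hmean, add_sub_cancel_left, mul_pow, ← mul_sum]
  ring

theorem varFam_norm_sub_sq {C : ℕ} {μ : Fin C → E} {R : ℝ} (hnorm : ∀ c, ‖μ c‖ = R)
    (hsum : ∑ c, μ c = 0) (w : E) :
    varFam (fun c => ‖w - μ c‖ ^ 2) = 4 / C * ∑ c, ⟪μ c, w⟫ ^ 2 := by
  have hexpand : ∀ c, ‖w - μ c‖ ^ 2 = (‖w‖ ^ 2 + R ^ 2) + (-2) * ⟪μ c, w⟫ := fun c => by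
    rw [norm_sub_sq_real, hnorm, real_inner_comm]
    ring
  have hcentered : ∑ c, ⟪μ c, w⟫ = 0 := by rw [← sum_inner, hsum, inner_zero_left]
  simp only [hexpand, varFam_const_add_mul _ _ hcentered]
  ring

theorem IsCenteredSimplexETF.varFam_norm_sub_sq {C : ℕ} {μ : Fin C → E} {R : ℝ}
    (h : IsCenteredSimplexETF μ R) (hC : 2 ≤ C) (w : E) :
    varFam (fun c => ‖w - μ c‖ ^ 2) =
      4 * R ^ 2 / ((C : ℝ) - 1) * ‖(Submodule.span ℝ (Set.range μ)).starProjection w‖ ^ 2 := by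
  have hC' : 2 ≤ Fintype.card (Fin C) := by simpa using hC
  have hframe := h.frameOperator_apply_self hC'
  rw [_root_.varFam_norm_sub_sq h.norm_eq h.sum_eq_zero,
    sum_inner_sq_eq_mul_norm_starProjection_sq hframe, Fintype.card_fin]
  have : (C : ℝ) ≠ 0 := by positivity
  field_simp

theorem id_variance_dominates_under_subspace_alignment_general {d C : ℕ} (hC : 2 ≤ C)
    (R : ℝ) (hR0 : 0 < R)
    (μ : Fin C → EuclideanSpace ℝ (Fin d))
    (hnorm : ∀ c, ‖μ c‖ = R)
    (hangle : ∀ c c', c ≠ c' → ⟪μ c, μ c'⟫ = -R ^ 2 / ((C : ℝ) - 1))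
    (hsum : ∑ c, μ c = 0)
    (x : EuclideanSpace ℝ (Fin d)) (hxnorm : ‖x‖ = 1)
    (cstar : Fin C)
    (hspan : x - μ cstar ∈ Submodule.span ℝ (Set.range μ))
    (z : EuclideanSpace ℝ (Fin d)) (hznorm : ‖z‖ = 1) :
    varFam (fun c => ‖z - μ c‖ ^ 2) ≤ varFam (fun c => ‖x - μ c‖ ^ 2) ∧
    (varFam (fun c => ‖x - μ c‖ ^ 2) = varFam (fun c => ‖z - μ c‖ ^ 2) ↔
      z ∈ Submodule.span ℝ (Set.range μ)) := by
  set V := Submodule.span ℝ (Set.range μ)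
  have hETF : IsCenteredSimplexETF μ R := ⟨hnorm, by simpa using hangle, hsum⟩
  have hxV : x ∈ V := by
    simpa using V.add_mem (Submodule.subset_span (Set.mem_range_self cstar)) hspan
  have hκ : 0 < 4 * R ^ 2 / ((C : ℝ) - 1) := by
    have : (2 : ℝ) ≤ C := by exact_mod_cast hC
    have : (0 : ℝ) < C - 1 := by linarith
    positivity
  have hPz : ‖V.starProjection z‖ ≤ 1 := hznorm ▸ V.norm_starProjection_apply_le z
  rw [hETF.varFam_norm_sub_sq hC, hETF.varFam_norm_sub_sq hC,
    Submodule.norm_starProjection_apply _ hxV, hxnorm, V.mem_iff_norm_starProjection, hznorm]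
  refine ⟨by gcongr, ?_⟩
  rw [mul_right_inj' hκ.ne', eq_comm, sq_eq_sq₀ (norm_nonneg _) zero_le_one]

theorem id_variance_dominates_under_subspace_alignment {d C : ℕ} (hC : 2 ≤ C)
    (R K ε : ℝ) (hR0 : 0 < R) (hR1 : R ≤ 1)
    (μ : Fin C → EuclideanSpace ℝ (Fin d))
    (hnorm : ∀ c, ‖μ c‖ = R)
    (hangle : ∀ c c', c ≠ c' → ⟪μ c, μ c'⟫ = -R ^ 2 / ((C : ℝ) - 1))
    (hsum : ∑ c, μ c = 0)
    (hK : K = R * Real.sqrt (2 * C / ((C : ℝ) - 1)))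
    (hε0 : 0 ≤ ε) (hε : ε < K / 2)
    (x : EuclideanSpace ℝ (Fin d)) (hxnorm : ‖x‖ = 1)
    (cstar : Fin C) (hx : ‖x - μ cstar‖ ≤ ε)
    (hspan : x - μ cstar ∈ Submodule.span ℝ (Set.range μ))
    (z : EuclideanSpace ℝ (Fin d)) (hznorm : ‖z‖ = 1) :
    varFam (fun c => ‖z - μ c‖ ^ 2) ≤ varFam (fun c => ‖x - μ c‖ ^ 2) ∧
    (varFam (fun c => ‖x - μ c‖ ^ 2) = varFam (fun c => ‖z - μ c‖ ^ 2) ↔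
      z ∈ Submodule.span ℝ (Set.range μ)) :=
  id_variance_dominates_under_subspace_alignment_general hC R hR0 μ hnorm hangle hsum x hxnorm cstar
    hspan z hznorm
end

section
/- Let C ≥ 2 and let μ_1,…,μ_C ∈ ℝ^d form a regular simplex with side K > 0. Fix an index c* and a vector x ∈ ℝ^d, and set Δ = x − μ_{c*}, ξ_c = 2⟨Δ, μ_{c*} − μ_c⟩ for c ≠ c*, ξ̄ = (1/(C−1))∑_{c≠c*} ξ_c, and S² = (1/(C−1))∑_{c≠c*}(ξ_c − ξ̄)². Then the class-wise variance of squared distances decomposes exactly as Var_c[‖x − μ_c‖²] = (C−1)(K² + ξ̄)²/C² + (C−1)S²/C. -/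
open scoped RealInnerProductSpace
open Finset

theorem variance_decomposition {d C : ℕ} (hC : 2 ≤ C) (K : ℝ) (hK : 0 < K)
    (μ : Fin C → EuclideanSpace ℝ (Fin d))
    (hsimplex : ∀ c c', c ≠ c' → ‖μ c - μ c'‖ = K)
    (cstar : Fin C) (x : EuclideanSpace ℝ (Fin d))
    (ξ : Fin C → ℝ)
    (hξ : ∀ c, ξ c = 2 * ⟪x - μ cstar, μ cstar - μ c⟫)
    (ξbar S2 : ℝ)
    (hξbar : ξbar = (1 / ((C : ℝ) - 1)) * ∑ c ∈ Finset.univ.erase cstar, ξ c)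
    (hS2 : S2 = (1 / ((C : ℝ) - 1)) * ∑ c ∈ Finset.univ.erase cstar, (ξ c - ξbar) ^ 2) :
    varFam (fun c => ‖x - μ c‖ ^ 2)
      = ((C : ℝ) - 1) * (K ^ 2 + ξbar) ^ 2 / (C : ℝ) ^ 2
        + ((C : ℝ) - 1) * S2 / (C : ℝ) := by
  have hC1 : (1:ℝ) ≤ (C:ℝ) := by exact_mod_cast Nat.one_le_of_lt hC
  have hCne : (C:ℝ) ≠ 0 := by positivity
  have hm : (C:ℝ) - 1 ≠ 0 := by
    have : (2:ℝ) ≤ (C:ℝ) := by exact_mod_cast hC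
    linarith
  set s : Finset (Fin C) := Finset.univ.erase cstar with hs
  have hcard : (s.card : ℝ) = (C:ℝ) - 1 := by
    have : s.card = C - 1 := by
      simp [hs, Finset.card_erase_of_mem, Finset.card_univ]
    rw [this, Nat.cast_sub (by omega)]
    simp
  set A : ℝ := ‖x - μ cstar‖ ^ 2 with hA
  set P : ℝ := ∑ c ∈ s, ξ c with hP
  set Q : ℝ := ∑ c ∈ s, (ξ c) ^ 2 with hQ
  have hpw : ∀ c ∈ s, ‖x - μ c‖ ^ 2 = A + ξ c + K ^ 2 := by
    intro c hc
    have hne : c ≠ cstar := (Finset.mem_erase.1 hc).1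
    have hsplit : x - μ c = (x - μ cstar) + (μ cstar - μ c) := by abel
    rw [hsplit, norm_add_sq_real, hsimplex cstar c (Ne.symm hne), hξ c, hA]
  -- total sum
  have hT : ∑ c, ‖x - μ c‖ ^ 2 = (C:ℝ) * A + P + ((C:ℝ) - 1) * K ^ 2 := by
    rw [← Finset.sum_erase_add _ _ (Finset.mem_univ cstar), ← hs,
      Finset.sum_congr rfl hpw]
    rw [Finset.sum_add_distrib, Finset.sum_add_distrib, Finset.sum_const,
      Finset.sum_const, nsmul_eq_mul, nsmul_eq_mul, hcard, ← hP, ← hA]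
    ring
  -- S2 in terms of P, Q
  have hS2' : S2 = (1 / ((C:ℝ) - 1)) * (Q - 2 * ξbar * P + ((C:ℝ) - 1) * ξbar ^ 2) := by
    rw [hS2]
    congr 1
    rw [Finset.sum_congr rfl (fun c _ => by ring :
      ∀ c ∈ s, (ξ c - ξbar) ^ 2 = (ξ c) ^ 2 - 2 * ξbar * ξ c + ξbar ^ 2)]
    rw [Finset.sum_add_distrib, Finset.sum_sub_distrib, ← Finset.mul_sum,
      Finset.sum_const, nsmul_eq_mul, hcard, ← hP, ← hQ]
  -- main sum of squared deviations
  set M : ℝ := (1 / (C:ℝ)) * ∑ c', ‖x - μ c'‖ ^ 2 with hM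
  have hMval : M = (1 / (C:ℝ)) * ((C:ℝ) * A + P + ((C:ℝ) - 1) * K ^ 2) := by
    rw [hM, hT]
  have hmain : ∑ c, (‖x - μ c‖ ^ 2 - M) ^ 2
      = (A - M) ^ 2 + (Q + 2 * (A + K ^ 2 - M) * P + ((C:ℝ) - 1) * (A + K ^ 2 - M) ^ 2) := by
    rw [← Finset.sum_erase_add _ _ (Finset.mem_univ cstar), ← hs, ← hA]
    rw [Finset.sum_congr rfl (fun c hc => by rw [hpw c hc]; ring :
      ∀ c ∈ s, (‖x - μ c‖ ^ 2 - M) ^ 2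
        = (ξ c) ^ 2 + 2 * (A + K ^ 2 - M) * ξ c + (A + K ^ 2 - M) ^ 2)]
    rw [Finset.sum_add_distrib, Finset.sum_add_distrib, ← Finset.mul_sum,
      Finset.sum_const, nsmul_eq_mul, hcard, ← hP, ← hQ]
    ring
  have hξbar' : ξbar = (1 / ((C:ℝ) - 1)) * P := hξbar
  show (1 / (C:ℝ)) * ∑ c, (‖x - μ c‖ ^ 2 - M) ^ 2
      = ((C : ℝ) - 1) * (K ^ 2 + ξbar) ^ 2 / (C : ℝ) ^ 2
        + ((C : ℝ) - 1) * S2 / (C : ℝ)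
  rw [hmain, hS2', hξbar', hMval]
  field_simp
  ring
end

section
/- Let C ≥ 3 and let μ_1,…,μ_C ∈ ℝ^d form a regular simplex with side K > 0, with centroid μ_G = (1/C)∑_{c=1}^C μ_c. Fix an index c* and for each c ≠ c* define v_c = (μ_{c*} − μ_G)/(C−1) + (μ_c − μ_G). Then ‖v_c‖² = K²(C−2)/(2(C−1)) for every c ≠ c*. -/
open scoped RealInnerProductSpace
open Finset

theorem vc_norm_sq {d C : ℕ} (hC : 3 ≤ C) (K : ℝ) (hK : 0 < K)
    (μ : Fin C → EuclideanSpace ℝ (Fin d))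
    (hsimplex : ∀ c c', c ≠ c' → ‖μ c - μ c'‖ = K)
    (μG : EuclideanSpace ℝ (Fin d)) (hμG : μG = (1 / (C : ℝ)) • ∑ c, μ c)
    (cstar : Fin C) :
    ∀ c, c ≠ cstar →
      ‖(1 / ((C : ℝ) - 1)) • (μ cstar - μG) + (μ c - μG)‖ ^ 2
        = K ^ 2 * ((C : ℝ) - 2) / (2 * ((C : ℝ) - 1)) := by
  intro c hc
  have hC0 : (C : ℝ) ≠ 0 := by
    have : (3:ℝ) ≤ C := by exact_mod_cast hC
    linarith
  have hC1 : (C : ℝ) - 1 ≠ 0 := by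
    have : (3:ℝ) ≤ C := by exact_mod_cast hC
    linarith
  set x : Fin C → EuclideanSpace ℝ (Fin d) := fun a => μ a - μG with hx
  have hsum : ∑ a, x a = 0 := by
    simp only [hx]
    rw [Finset.sum_sub_distrib, Finset.sum_const, card_univ, Fintype.card_fin, hμG,
      ← Nat.cast_smul_eq_nsmul ℝ, smul_smul]
    rw [mul_one_div, div_self hC0, one_smul, sub_self]
  have hdist : ∀ a b : Fin C, a ≠ b → ‖x a - x b‖ = K := by
    intro a b hab
    have : x a - x b = μ a - μ b := by simp [hx]
    rw [this]; exact hsimplex a b hab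
  set T : ℝ := ∑ b, ‖x b‖ ^ 2 with hT
  have key : ∀ a : Fin C, (C : ℝ) * ‖x a‖ ^ 2 + T = ((C : ℝ) - 1) * K ^ 2 := by
    intro a
    have h1 : ∑ b, ‖x a - x b‖ ^ 2 = ((C : ℝ) - 1) * K ^ 2 := by
      rw [← Finset.add_sum_erase _ _ (mem_univ a)]
      rw [sub_self, norm_zero]
      have : ∀ b ∈ univ.erase a, ‖x a - x b‖ ^ 2 = K ^ 2 := by
        intro b hb
        rw [hdist a b (Ne.symm (Finset.ne_of_mem_erase hb))]
      rw [Finset.sum_congr rfl this, Finset.sum_const, Finset.card_erase_of_mem (mem_univ a),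
        card_univ, Fintype.card_fin, nsmul_eq_mul]
      have : ((C - 1 : ℕ) : ℝ) = (C : ℝ) - 1 := by
        have : 1 ≤ C := by omega
        push_cast [Nat.cast_sub this]; ring
      rw [this]; ring
    have h2 : ∑ b, ‖x a - x b‖ ^ 2
        = (C : ℝ) * ‖x a‖ ^ 2 - 2 * ⟪x a, ∑ b, x b⟫ + T := by
      have hexp : ∀ b : Fin C, ‖x a - x b‖ ^ 2
          = ‖x a‖ ^ 2 - 2 * ⟪x a, x b⟫ + ‖x b‖ ^ 2 := fun b => norm_sub_sq_real _ _
      rw [Finset.sum_congr rfl fun b _ => hexp b]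
      rw [Finset.sum_add_distrib, Finset.sum_sub_distrib, Finset.sum_const, card_univ,
        Fintype.card_fin, nsmul_eq_mul, ← Finset.mul_sum, inner_sum]
    rw [h2, hsum, inner_zero_right] at h1
    linarith
  have hTval : T = ((C : ℝ) - 1) * K ^ 2 / 2 := by
    have heach : ∀ a : Fin C, ‖x a‖ ^ 2 = (((C : ℝ) - 1) * K ^ 2 - T) / C := by
      intro a
      have := key a
      field_simp
      linarith
    have hsum2 : ∑ b : Fin C, ‖x b‖ ^ 2 = (C : ℝ) * ((((C : ℝ) - 1) * K ^ 2 - T) / C) := by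
      rw [Finset.sum_congr rfl fun a _ => heach a, Finset.sum_const, card_univ,
        Fintype.card_fin, nsmul_eq_mul]
    have h3 : T = (C : ℝ) * ((((C : ℝ) - 1) * K ^ 2 - T) / C) := hT.trans hsum2
    field_simp at h3
    linarith
  have hs : ∀ a : Fin C, ‖x a‖ ^ 2 = ((C : ℝ) - 1) * K ^ 2 / (2 * C) := by
    intro a
    have := key a
    rw [hTval] at this
    field_simp at this ⊢
    linarith
  have hi : ⟪x cstar, x c⟫ = -K ^ 2 / (2 * C) := by
    have hK2 : ‖x cstar - x c‖ ^ 2 = K ^ 2 := by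
      rw [hdist cstar c (Ne.symm hc)]
    rw [norm_sub_sq_real, hs cstar, hs c] at hK2
    field_simp at hK2 ⊢
    linarith
  have hfinal : ‖(1 / ((C : ℝ) - 1)) • x cstar + x c‖ ^ 2
      = (1 / ((C : ℝ) - 1)) ^ 2 * ‖x cstar‖ ^ 2
        + 2 * ((1 / ((C : ℝ) - 1)) * ⟪x cstar, x c⟫) + ‖x c‖ ^ 2 := by
    rw [norm_add_sq_real, real_inner_smul_left, norm_smul]
    simp [mul_pow]
  show ‖(1 / ((C : ℝ) - 1)) • x cstar + x c‖ ^ 2 = K ^ 2 * ((C : ℝ) - 2) / (2 * ((C : ℝ) - 1))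
  rw [hfinal, hs cstar, hs c, hi]
  field_simp
  ring
end

section
/- Let C ≥ 2 and let μ_1,…,μ_C ∈ ℝ^d form a regular simplex with side K > 0. Fix an index c* and a vector Δ ∈ ℝ^d with ‖Δ‖ ≤ ε, and set ξ_c = 2⟨Δ, μ_{c*} − μ_c⟩ for c ≠ c* and ξ̄ = (1/(C−1))∑_{c≠c*} ξ_c. Then the empirical variance of the ξ_c satisfies (1/(C−1))∑_{c≠c*}(ξ_c − ξ̄)² ≤ 2ε²K²(C−2)/(C−1). -/
open scoped RealInnerProductSpace
open Finset

theorem xi_variance_bound {d C : ℕ} (hC : 2 ≤ C) (K ε : ℝ) (hK : 0 < K)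
    (μ : Fin C → EuclideanSpace ℝ (Fin d))
    (hsimplex : ∀ c c', c ≠ c' → ‖μ c - μ c'‖ = K)
    (cstar : Fin C) (Δ : EuclideanSpace ℝ (Fin d)) (hΔ : ‖Δ‖ ≤ ε)
    (ξ : Fin C → ℝ)
    (hξ : ∀ c, ξ c = 2 * ⟪Δ, μ cstar - μ c⟫)
    (ξbar : ℝ)
    (hξbar : ξbar = (1 / ((C : ℝ) - 1)) * ∑ c ∈ Finset.univ.erase cstar, ξ c) :
    (1 / ((C : ℝ) - 1)) * ∑ c ∈ Finset.univ.erase cstar, (ξ c - ξbar) ^ 2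
      ≤ 2 * ε ^ 2 * K ^ 2 * ((C : ℝ) - 2) / ((C : ℝ) - 1) := by
  classical
  set s : Finset (Fin C) := Finset.univ.erase cstar with hs
  set n : ℝ := (C : ℝ) - 1 with hn
  have hC2 : (2 : ℝ) ≤ (C : ℝ) := by exact_mod_cast hC
  have hn1 : (1 : ℝ) ≤ n := by simp [hn]; linarith
  have hn0 : 0 < n := by linarith
  have hne : n ≠ 0 := ne_of_gt hn0
  have hcard : (s.card : ℝ) = n := by
    have : s.card = C - 1 := by
      simp [hs, Finset.card_erase_of_mem, Finset.card_univ]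
    rw [this, hn]
    have : (1:ℕ) ≤ C := by omega
    push_cast [Nat.cast_sub this]
    ring
  set S : EuclideanSpace ℝ (Fin d) := ∑ c ∈ s, μ c with hS
  set m : EuclideanSpace ℝ (Fin d) := n⁻¹ • S with hm
  have hεnn : 0 ≤ ε := le_trans (norm_nonneg _) hΔ
  -- ξbar in terms of m
  have hinnerS : ⟪Δ, S⟫ = ∑ c ∈ s, ⟪Δ, μ c⟫ := by
    rw [hS, inner_sum]
  have hxibar : ξbar = 2 * ⟪Δ, μ cstar⟫ - 2 * ⟪Δ, m⟫ := by
    have hsum : ∑ c ∈ s, ξ c = n * (2 * ⟪Δ, μ cstar⟫) - 2 * ⟪Δ, S⟫ := by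
      rw [hinnerS]
      calc ∑ c ∈ s, ξ c = ∑ c ∈ s, (2 * ⟪Δ, μ cstar⟫ - 2 * ⟪Δ, μ c⟫) := by
            refine Finset.sum_congr rfl fun c hc => ?_
            rw [hξ c, inner_sub_right]; ring
        _ = (s.card : ℝ) * (2 * ⟪Δ, μ cstar⟫) - 2 * ∑ c ∈ s, ⟪Δ, μ c⟫ := by
            rw [Finset.sum_sub_distrib, Finset.sum_const, ← Finset.mul_sum]
            push_cast; ring
        _ = n * (2 * ⟪Δ, μ cstar⟫) - 2 * ∑ c ∈ s, ⟪Δ, μ c⟫ := by rw [hcard]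
    have hmS : ⟪Δ, m⟫ = n⁻¹ * ⟪Δ, S⟫ := by
      rw [hm, real_inner_smul_right]
    rw [hξbar, hsum, hmS]
    field_simp
  -- pointwise identity
  have hpt : ∀ c ∈ s, ξ c - ξbar = 2 * ⟪Δ, m - μ c⟫ := by
    intro c hc
    rw [hξ c, hxibar, inner_sub_right, inner_sub_right]
    ring
  -- Cauchy-Schwarz pointwise bound
  have hptb : ∀ c ∈ s, (ξ c - ξbar) ^ 2 ≤ 4 * ε ^ 2 * ‖m - μ c‖ ^ 2 := by
    intro c hc
    rw [hpt c hc]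
    have hcs : ⟪Δ, m - μ c⟫ * ⟪Δ, m - μ c⟫ ≤ ⟪Δ, Δ⟫ * ⟪m - μ c, m - μ c⟫ :=
      real_inner_mul_inner_self_le Δ (m - μ c)
    rw [real_inner_self_eq_norm_sq, real_inner_self_eq_norm_sq] at hcs
    have hΔ2 : ‖Δ‖ ^ 2 ≤ ε ^ 2 := by
      have := norm_nonneg Δ
      nlinarith
    have hnn : (0:ℝ) ≤ ‖m - μ c‖ ^ 2 := sq_nonneg _
    nlinarith
  -- key variance identity machinery
  set T : ℝ := ∑ c ∈ s, ‖μ c‖ ^ 2 with hT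
  have hA : ∑ c ∈ s, ‖m - μ c‖ ^ 2 = T - n⁻¹ * ‖S‖ ^ 2 := by
    have hnorm : ∀ c ∈ s, ‖m - μ c‖ ^ 2 = ‖m‖ ^ 2 - 2 * ⟪m, μ c⟫ + ‖μ c‖ ^ 2 := by
      intro c hc
      exact norm_sub_sq_real m (μ c)
    rw [Finset.sum_congr rfl hnorm]
    have h1 : ∑ c ∈ s, ⟪m, μ c⟫ = ⟪m, S⟫ := by rw [hS, inner_sum]
    have h2 : ⟪m, S⟫ = n⁻¹ * ‖S‖ ^ 2 := by
      rw [hm, real_inner_smul_left, real_inner_self_eq_norm_sq]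
    have h3 : ‖m‖ ^ 2 = (n⁻¹) ^ 2 * ‖S‖ ^ 2 := by
      rw [hm, norm_smul]
      have : ‖(n⁻¹ : ℝ)‖ = n⁻¹ := by
        rw [Real.norm_eq_abs, abs_of_nonneg (by positivity)]
      rw [this]; ring
    rw [Finset.sum_add_distrib, Finset.sum_sub_distrib, Finset.sum_const,
      ← Finset.mul_sum, h1, h2, h3, nsmul_eq_mul, hcard, ← hT]
    field_simp
    ring
  have hB : ∑ c ∈ s, ∑ c' ∈ s, ‖μ c - μ c'‖ ^ 2 = 2 * n * T - 2 * ‖S‖ ^ 2 := by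
    have hinner : ∀ c ∈ s, ∑ c' ∈ s, ‖μ c - μ c'‖ ^ 2
        = n * ‖μ c‖ ^ 2 - 2 * ⟪μ c, S⟫ + T := by
      intro c hc
      have : ∀ c' ∈ s, ‖μ c - μ c'‖ ^ 2 = ‖μ c‖ ^ 2 - 2 * ⟪μ c, μ c'⟫ + ‖μ c'‖ ^ 2 := by
        intro c' _
        exact norm_sub_sq_real (μ c) (μ c')
      rw [Finset.sum_congr rfl this, Finset.sum_add_distrib, Finset.sum_sub_distrib,
        Finset.sum_const, ← Finset.mul_sum, ← inner_sum, nsmul_eq_mul, hcard, ← hT, ← hS]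
    rw [Finset.sum_congr rfl hinner]
    simp only [Finset.sum_add_distrib, Finset.sum_sub_distrib, ← Finset.mul_sum,
      Finset.sum_const, nsmul_eq_mul, hcard]
    rw [← sum_inner, ← hS, real_inner_self_eq_norm_sq, ← hT]
    ring
  have hD : ∑ c ∈ s, ∑ c' ∈ s, ‖μ c - μ c'‖ ^ 2 = n * ((n - 1) * K ^ 2) := by
    have hinner : ∀ c ∈ s, ∑ c' ∈ s, ‖μ c - μ c'‖ ^ 2 = (n - 1) * K ^ 2 := by
      intro c hc
      have hsplit : ∑ c' ∈ s, ‖μ c - μ c'‖ ^ 2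
          = ∑ c' ∈ s.erase c, ‖μ c - μ c'‖ ^ 2 + ‖μ c - μ c‖ ^ 2 :=
        (Finset.sum_erase_add s _ hc).symm
      have hval : ∀ c' ∈ s.erase c, ‖μ c - μ c'‖ ^ 2 = K ^ 2 := by
        intro c' hc'
        have hne' : c ≠ c' := (Finset.ne_of_mem_erase hc').symm
        rw [hsimplex c c' hne']
      have hcarde : ((s.erase c).card : ℝ) = n - 1 := by
        rw [Finset.card_erase_of_mem hc]
        have h1 : 1 ≤ s.card := Finset.card_pos.mpr ⟨c, hc⟩
        push_cast [Nat.cast_sub h1]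
        rw [hcard]
      rw [hsplit, Finset.sum_congr rfl hval, Finset.sum_const, nsmul_eq_mul, hcarde]
      simp
    rw [Finset.sum_congr rfl hinner, Finset.sum_const, nsmul_eq_mul, hcard]
  -- variance value
  have hvar : ∑ c ∈ s, ‖m - μ c‖ ^ 2 = (n - 1) * K ^ 2 / 2 := by
    have hBD : 2 * n * T - 2 * ‖S‖ ^ 2 = n * ((n - 1) * K ^ 2) := by rw [← hB, hD]
    have hS2 : ‖S‖ ^ 2 = n * T - n * ((n - 1) * K ^ 2) / 2 := by linear_combination -hBD / 2
    rw [hA, hS2]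
    field_simp
    ring
  -- sum bound
  have hsum : ∑ c ∈ s, (ξ c - ξbar) ^ 2 ≤ 2 * ε ^ 2 * K ^ 2 * (n - 1) := by
    calc ∑ c ∈ s, (ξ c - ξbar) ^ 2 ≤ ∑ c ∈ s, 4 * ε ^ 2 * ‖m - μ c‖ ^ 2 :=
          Finset.sum_le_sum hptb
      _ = 4 * ε ^ 2 * ∑ c ∈ s, ‖m - μ c‖ ^ 2 := by rw [Finset.mul_sum]
      _ = 4 * ε ^ 2 * ((n - 1) * K ^ 2 / 2) := by rw [hvar]
      _ = 2 * ε ^ 2 * K ^ 2 * (n - 1) := by ring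
  have hfin : n⁻¹ * ∑ c ∈ s, (ξ c - ξbar) ^ 2 ≤ 2 * ε ^ 2 * K ^ 2 * (n - 1) / n := by
    rw [div_eq_mul_inv, mul_comm (2 * ε ^ 2 * K ^ 2 * (n - 1)) n⁻¹]
    exact mul_le_mul_of_nonneg_left hsum (by positivity)
  have h21 : (C : ℝ) - 2 = n - 1 := by rw [hn]; ring
  rw [h21, one_div]
  exact hfin
end

section
/- Let C ≥ 2 and let μ_1,…,μ_C ∈ ℝ^d form a centered simplex ETF with radius R > 0, and let K = R·√(2C/(C−1)) denote the common pairwise distance. If x ∈ ℝ^d satisfies ‖x − μ_{c*}‖ ≤ ε for some index c* with 0 ≤ ε < K/2, then Var_c[‖x − μ_c‖²] ≥ 4R²(R−ε)²/(C−1). -/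
open scoped RealInnerProductSpace
open Finset

set_option maxHeartbeats 1000000 in
theorem id_variance_lower_bound_etf {d C : ℕ} (hC : 2 ≤ C) (R K ε : ℝ) (hR : 0 < R)
    (μ : Fin C → EuclideanSpace ℝ (Fin d))
    (hnorm : ∀ c, ‖μ c‖ = R)
    (hangle : ∀ c c', c ≠ c' → ⟪μ c, μ c'⟫ = -R ^ 2 / ((C : ℝ) - 1))
    (hsum : ∑ c, μ c = 0)
    (hK : K = R * Real.sqrt (2 * (C : ℝ) / ((C : ℝ) - 1)))
    (hε0 : 0 ≤ ε) (hε : ε < K / 2)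
    (x : EuclideanSpace ℝ (Fin d)) (cstar : Fin C)
    (hx : ‖x - μ cstar‖ ≤ ε) :
    4 * R ^ 2 * (R - ε) ^ 2 / ((C : ℝ) - 1) ≤ varFam (fun c => ‖x - μ c‖ ^ 2) := by
  have hCpos : (0:ℝ) < C := by positivity
  have hC1 : (1:ℝ) ≤ (C:ℝ) - 1 := by
    have : (2:ℝ) ≤ C := by exact_mod_cast hC
    linarith
  have hC1pos : (0:ℝ) < (C:ℝ) - 1 := by linarith
  set s : Fin C → ℝ := fun c => ⟪x, μ c⟫ with hs
  -- sum of s is 0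
  have hsumS : ∑ c, s c = 0 := by
    simp only [hs]
    rw [← inner_sum, hsum, inner_zero_right]
  -- ε < R
  have hεR : ε < R := by
    have hle : Real.sqrt (2 * (C : ℝ) / ((C : ℝ) - 1)) ≤ 2 := by
      have h4 : 2 * (C : ℝ) / ((C : ℝ) - 1) ≤ 2 ^ 2 := by
        rw [div_le_iff₀ hC1pos]
        have : (2:ℝ) ≤ C := by exact_mod_cast hC
        nlinarith
      calc Real.sqrt (2 * (C : ℝ) / ((C : ℝ) - 1)) ≤ Real.sqrt (2^2) :=
            Real.sqrt_le_sqrt h4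
        _ = 2 := Real.sqrt_sq (by norm_num)
    have : K ≤ 2 * R := by
      rw [hK]
      calc R * Real.sqrt (2 * (C : ℝ) / ((C : ℝ) - 1)) ≤ R * 2 :=
            mul_le_mul_of_nonneg_left hle hR.le
        _ = 2 * R := by ring
    linarith
  -- s cstar ≥ R (R - ε)
  have hscstar : R * (R - ε) ≤ s cstar := by
    have h1 : s cstar = ⟪x - μ cstar, μ cstar⟫ + R ^ 2 := by
      simp only [hs]
      rw [inner_sub_left, real_inner_self_eq_norm_sq, hnorm]
      ring
    have h2 : -(ε * R) ≤ ⟪x - μ cstar, μ cstar⟫ := by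
      have := abs_real_inner_le_norm (x - μ cstar) (μ cstar)
      have h3 : |⟪x - μ cstar, μ cstar⟫| ≤ ε * R := by
        calc |⟪x - μ cstar, μ cstar⟫| ≤ ‖x - μ cstar‖ * ‖μ cstar‖ := this
          _ ≤ ε * R := by
              rw [hnorm]
              exact mul_le_mul_of_nonneg_right hx hR.le
      linarith [neg_abs_le ⟪x - μ cstar, μ cstar⟫]
    rw [h1]; nlinarith
  have hspos : 0 < s cstar := lt_of_lt_of_le (by nlinarith) hscstar
  -- Cauchy-Schwarz on the rest
  have herase : ∑ c ∈ univ.erase cstar, s c = - s cstar := by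
    have := Finset.sum_erase_add univ s (mem_univ cstar)
    linarith [hsumS ▸ this]
  have hcard : (#(univ.erase cstar) : ℝ) = (C:ℝ) - 1 := by
    rw [Finset.card_erase_of_mem (mem_univ cstar), Finset.card_univ, Fintype.card_fin]
    have : 1 ≤ C := by omega
    push_cast [this]
    ring
  have hCS : (s cstar) ^ 2 / ((C:ℝ) - 1) ≤ ∑ c ∈ univ.erase cstar, (s c) ^ 2 := by
    have := sq_sum_le_card_mul_sum_sq (s := univ.erase cstar) (f := s)
    rw [herase, hcard] at this
    rw [div_le_iff₀ hC1pos]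
    nlinarith
  have hsumsq : (s cstar) ^ 2 * ((C:ℝ) / ((C:ℝ) - 1)) ≤ ∑ c, (s c) ^ 2 := by
    have hrw : ∑ c, (s c)^2 = (∑ c ∈ univ.erase cstar, (s c)^2) + (s cstar)^2 :=
      (Finset.sum_erase_add univ (fun c => (s c)^2) (mem_univ cstar)).symm
    rw [hrw]
    have : (s cstar) ^ 2 * ((C:ℝ) / ((C:ℝ) - 1)) =
        (s cstar)^2 / ((C:ℝ)-1) + (s cstar)^2 := by
      field_simp; ring
    linarith [hCS]
  -- variance formula
  have hvar : varFam (fun c => ‖x - μ c‖ ^ 2) = (4 / (C:ℝ)) * ∑ c, (s c) ^ 2 := by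
    unfold varFam
    have hac : ∀ c : Fin C, ‖x - μ c‖ ^ 2 = ‖x‖^2 - 2 * s c + R^2 := by
      intro c
      rw [norm_sub_sq_real, hnorm]
    have hmean : (1 / (C : ℝ)) * ∑ c', ‖x - μ c'‖ ^ 2 = ‖x‖^2 + R^2 := by
      have : ∑ c', ‖x - μ c'‖ ^ 2 = (C:ℝ) * (‖x‖^2 + R^2) := by
        simp only [hac]
        rw [Finset.sum_add_distrib, Finset.sum_sub_distrib, Finset.sum_const,
          Finset.sum_const, ← Finset.mul_sum, hsumS]
        simp [Fintype.card_fin]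
        ring
      rw [this]
      field_simp
    rw [hmean]
    have : ∀ c : Fin C, (‖x - μ c‖ ^ 2 - (‖x‖^2 + R^2))^2 = 4 * (s c)^2 := by
      intro c; rw [hac]; ring
    rw [Finset.sum_congr rfl (fun c _ => this c), ← Finset.mul_sum]
    ring
  rw [hvar]
  have h0 : 0 ≤ R * (R - ε) := by nlinarith
  have h1 : R^2 * (R - ε)^2 ≤ (s cstar)^2 := by
    have := pow_le_pow_left₀ h0 hscstar 2
    nlinarith [this]
  have h2 : (4 / (C:ℝ)) * ((s cstar) ^ 2 * ((C:ℝ) / ((C:ℝ) - 1))) ≤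
      (4 / (C:ℝ)) * ∑ c, (s c) ^ 2 := by
    apply mul_le_mul_of_nonneg_left hsumsq (by positivity)
  calc 4 * R ^ 2 * (R - ε) ^ 2 / ((C : ℝ) - 1)
      ≤ 4 * (s cstar)^2 / ((C:ℝ) - 1) := by
        rw [div_le_div_iff₀ hC1pos hC1pos]
        nlinarith
    _ = (4 / (C:ℝ)) * ((s cstar) ^ 2 * ((C:ℝ) / ((C:ℝ) - 1))) := by
        field_simp
    _ ≤ _ := h2
end
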